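/- There exists a unique sequence of bivariate polynomials f_m ∈ ℂ[x, x̄] such that f_m(φ₁(θ), φ₂(θ)) = φ₁(mθ) for all θ ∈ ℝ², where φ₂ = conj(φ₁); and these satisfy f_0 = 1, f_1 = x, f_2 = 3x² − 2x̄. -/

import Mathlib

open Complex MvPolynomial

/-- The first component of the generalized cosine for the root system `A₂`. -/
noncomputable def phi1 (θ : ℝ × ℝ) : ℂ :=
  (1 / 3) * (Complex.exp (2 * Real.pi * Complex.I * θ.1) +
    Complex.exp (-(2 * Real.pi * Complex.I * θ.2)) +
    Complex.exp (2 * Real.pi * Complex.I * (θ.2 - θ.1)))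

/-!
Put `a = 𝐞 θ₁`, `b = 𝐞 (-θ₂)`, `c = 𝐞 (θ₂ - θ₁)`: points of the unit circle with `abc = 1`, so
`φ₁(θ) = e₁/3`, `φ₂(θ) = conj(e₁)/3 = e₂/3` and `φ₁(mθ) = (aᵐ + bᵐ + cᵐ)/3`, where `e₁, e₂` are the
elementary symmetric functions of `a, b, c`. Newton's identities express the power sums through
`e₁, e₂` and `e₃ = 1`, which gives the polynomials by a three-term recursion.

For uniqueness, a polynomial `P` vanishing at all `(φ₁(θ), φ₂(θ))` vanishes at `(e₁/3, e₂/3)`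
for all `a, b` on the circle. Over the common denominator `3ab` this is a polynomial in `(a, b)`
vanishing on the torus, hence everywhere; and every point `(x, y) ∈ ℂ²` is `(e₁/3, e₂/3)` for the
roots of `t³ - 3x t² + 3y t - 1`, so `P = 0`.
-/

open scoped FourierTransform

-- Newton's identity `pₙ₊₃ = e₁ pₙ₊₂ - e₂ pₙ₊₁ + e₃ pₙ` with `e₁ = 3x`, `e₂ = 3x̄`, `e₃ = 1`.
noncomputable def chebyshevA2 (R : Type*) [CommRing R] : ℕ → MvPolynomial (Fin 2) R
  | 0 => 1
  | 1 => X 0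
  | 2 => 3 * X 0 ^ 2 - 2 * X 1
  | n + 3 => 3 * X 0 * chebyshevA2 R (n + 2) - 3 * X 1 * chebyshevA2 R (n + 1) + chebyshevA2 R n

theorem three_mul_eval_chebyshevA2 {R : Type*} [CommRing R] {a b c : R} (habc : a * b * c = 1)
    {p : Fin 2 → R} (h0 : 3 * p 0 = a + b + c) (h1 : 3 * p 1 = a * b + b * c + c * a) (n : ℕ) :
    3 * eval p (chebyshevA2 R n) = a ^ n + b ^ n + c ^ n := by
  induction n using chebyshevA2.induct with
  | case1 => simp only [chebyshevA2, map_one]; ring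
  | case2 => simp only [chebyshevA2, eval_X, h0]; ring
  | case3 =>
    simp only [chebyshevA2, map_sub, map_mul, map_pow, map_ofNat, eval_X]
    linear_combination (3 * p 0 + a + b + c) * h0 - 2 * h1
  | case4 n ih2 ih1 ih0 =>
    simp only [chebyshevA2, map_add, map_sub, map_mul, map_ofNat, eval_X, Nat.succ_eq_add_one]
    linear_combination 3 * eval p (chebyshevA2 R (n + 2)) * h0 + (a + b + c) * ih2
      - 3 * eval p (chebyshevA2 R (n + 1)) * h1 - (a * b + b * c + c * a) * ih1 + ih0
      - (a ^ n + b ^ n + c ^ n) * habc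

noncomputable def symmPoint (a b c : ℂ) : Fin 2 → ℂ :=
  ![(a + b + c) / 3, (a * b + b * c + c * a) / 3]

theorem eval_chebyshevA2_symmPoint {a b c : ℂ} (habc : a * b * c = 1) (n : ℕ) :
    eval (symmPoint a b c) (chebyshevA2 ℂ n) = (a ^ n + b ^ n + c ^ n) / 3 :=
  eq_div_of_mul_eq three_ne_zero <| by
    rw [mul_comm]
    exact three_mul_eval_chebyshevA2 habc (mul_div_cancel₀ _ three_ne_zero)
      (mul_div_cancel₀ _ three_ne_zero) n

theorem MvPolynomial.exists_eval_eq_pow_mul_eval_div {σ τ K : Type*} [Field K]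
    (P : MvPolynomial σ K) (a : σ → MvPolynomial τ K) (c : MvPolynomial τ K) :
    ∃ (Q : MvPolynomial τ K) (N : ℕ), ∀ z : τ → K, eval z c ≠ 0 →
      eval z Q = eval z c ^ N * eval (fun i ↦ eval z (a i) / eval z c) P := by
  induction P using MvPolynomial.induction_on with
  | C k => exact ⟨C k, 0, by simp⟩
  | add p q hp hq =>
    obtain ⟨Qp, Np, hp⟩ := hp
    obtain ⟨Qq, Nq, hq⟩ := hq
    refine ⟨Qp * c ^ Nq + Qq * c ^ Np, Np + Nq, fun z hz ↦ ?_⟩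
    simp only [map_add, map_mul, map_pow, hp z hz, hq z hz]
    ring
  | mul_X p i hp =>
    obtain ⟨Q, N, hp⟩ := hp
    refine ⟨Q * a i, N + 1, fun z hz ↦ ?_⟩
    simp only [map_mul, hp z hz, eval_X]
    field_simp
    ring

theorem Complex.sphere_zero_one_infinite : (Metric.sphere (0 : ℂ) 1).Infinite :=
  (isConnected_sphere (by simp [Complex.rank_real_complex]) 0 zero_le_one).isPreconnected
    |>.infinite_of_nontrivial ⟨1, by simp, -1, by simp, by norm_num⟩

theorem eval_symmPoint_eq_zero_of_circle (P : MvPolynomial (Fin 2) ℂ)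
    (h : ∀ a b c : Circle, a * b * c = 1 → eval (symmPoint a b c) P = 0)
    {a b c : ℂ} (habc : a * b * c = 1) : eval (symmPoint a b c) P = 0 := by
  -- `(a + b + c) / 3` and `(ab + bc + ca) / 3` with `c = (ab)⁻¹`, over the denominator `3ab`
  obtain ⟨Q, N, hQ⟩ := P.exists_eval_eq_pow_mul_eval_div (τ := Fin 2)
    ![X 0 ^ 2 * X 1 + X 0 * X 1 ^ 2 + 1, X 0 + X 1 + X 0 ^ 2 * X 1 ^ 2] (3 * X 0 * X 1)
  have eval_Q : ∀ {a b c : ℂ}, a * b * c = 1 →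
      eval ![a, b] Q = (3 * a * b) ^ N * eval (symmPoint a b c) P := by
    intro a b c habc
    have ha : a ≠ 0 := by rintro rfl; simp at habc
    have hb : b ≠ 0 := by rintro rfl; simp at habc
    rw [hQ ![a, b] (by simp [ha, hb])]
    congr 2
    · simp
    congr 1
    funext i
    fin_cases i <;>
      simp only [symmPoint, Fin.zero_eta, Fin.mk_one, Matrix.cons_val_zero, Matrix.cons_val_one,
        Matrix.cons_val_fin_one, map_add, map_mul, map_pow, map_one, eval_X, eval_ofNat] <;>
      field_simp
    · linear_combination -habc
    · linear_combination -(a + b) * habc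
  have hQ0 : Q = 0 := by
    refine MvPolynomial.funext_set (fun _ ↦ Metric.sphere 0 1)
      (fun _ ↦ Complex.sphere_zero_one_infinite) fun z hz ↦ ?_
    let u : Circle := ⟨z 0, hz 0 trivial⟩
    let v : Circle := ⟨z 1, hz 1 trivial⟩
    have huv : u * v * (u * v)⁻¹ = 1 := mul_inv_cancel _
    have hz : z = ![(u : ℂ), v] := by funext i; fin_cases i <;> rfl
    rw [hz, eval_Q (congrArg ((↑) : Circle → ℂ) huv), h _ _ _ huv, mul_zero, map_zero]
  have h3ab : (3 * a * b) ^ N ≠ 0 :=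
    pow_ne_zero _ fun h0 ↦ (three_ne_zero : (3 : ℂ) ≠ 0) (by linear_combination c * h0 - 3 * habc)
  simpa [hQ0, h3ab] using eval_Q habc

theorem exists_symmPoint_eq (z : Fin 2 → ℂ) : ∃ a b c : ℂ, a * b * c = 1 ∧ symmPoint a b c = z := by
  obtain ⟨a, ha⟩ := IsAlgClosed.exists_root
    (Polynomial.X ^ 3 - Polynomial.C (3 * z 0) * Polynomial.X ^ 2
      + Polynomial.C (3 * z 1) * Polynomial.X - 1)
    (by rw [show Polynomial.degree _ = 3 by compute_degree!]; decide)
  obtain ⟨b, hb⟩ := IsAlgClosed.exists_root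
    (Polynomial.X ^ 2 + Polynomial.C (a - 3 * z 0) * Polynomial.X + Polynomial.C a⁻¹)
    (by rw [show Polynomial.degree _ = 2 by compute_degree!]; decide)
  simp only [Polynomial.IsRoot, Polynomial.eval_sub, Polynomial.eval_add, Polynomial.eval_mul,
    Polynomial.eval_pow, Polynomial.eval_C, Polynomial.eval_X, Polynomial.eval_one] at ha hb
  have ha0 : a ≠ 0 := by rintro rfl; norm_num at ha
  have habc : a * b * (3 * z 0 - a - b) = 1 := by
    linear_combination (-a) * hb + mul_inv_cancel₀ ha0
  refine ⟨a, b, 3 * z 0 - a - b, habc, funext fun i ↦ ?_⟩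
  fin_cases i
  · simp [symmPoint]
  · simp only [symmPoint, Fin.mk_one, Matrix.cons_val_one, Matrix.cons_val_fin_one]
    rw [div_eq_iff three_ne_zero]
    refine mul_left_cancel₀ ha0 ?_
    linear_combination -ha - a * hb + mul_inv_cancel₀ ha0

theorem Real.fourierChar_surjective : Function.Surjective 𝐞 := by
  intro a
  obtain ⟨r, rfl⟩ := Circle.exp_surjective a
  refine ⟨r / (2 * Real.pi), ?_⟩
  rw [Real.fourierChar_apply', mul_div_cancel₀ _ (by positivity)]

theorem fourierChar_mul_mul_eq_one (s t : ℝ) : 𝐞 s * 𝐞 (-t) * 𝐞 (t - s) = 1 := by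
  rw [← AddChar.map_add_eq_mul, ← AddChar.map_add_eq_mul, ← AddChar.map_zero_eq_one 𝐞]
  ring_nf

theorem Circle.starRingEnd_add_add {a b c : Circle} (h : a * b * c = 1) :
    starRingEnd ℂ ((a : ℂ) + b + c) = a * b + b * c + c * a := by
  have ha : a⁻¹ = b * c := inv_eq_of_mul_eq_one_right (by rw [← h, mul_assoc])
  have hb : b⁻¹ = c * a := inv_eq_of_mul_eq_one_right (by rw [← h]; ac_rfl)
  have hc : c⁻¹ = a * b := inv_eq_of_mul_eq_one_right (by rw [← h]; ac_rfl)
  simp only [map_add, ← Circle.coe_inv_eq_conj, ha, hb, hc, Circle.coe_mul]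
  ring

theorem exists_fourierChar_eq {a b c : Circle} (h : a * b * c = 1) :
    ∃ θ : ℝ × ℝ, 𝐞 θ.1 = a ∧ 𝐞 (-θ.2) = b ∧ 𝐞 (θ.2 - θ.1) = c := by
  obtain ⟨s, rfl⟩ := Real.fourierChar_surjective a
  obtain ⟨t, rfl⟩ := Real.fourierChar_surjective b
  refine ⟨(s, -t), rfl, by simp, mul_left_cancel ((?_ : _ = (1 : Circle)).trans h.symm)⟩
  simpa using fourierChar_mul_mul_eq_one s (-t)

theorem phi1_nat_mul (θ : ℝ × ℝ) (m : ℕ) :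
    phi1 ((m : ℝ) * θ.1, (m : ℝ) * θ.2) =
      ((𝐞 θ.1 : ℂ) ^ m + (𝐞 (-θ.2) : ℂ) ^ m + (𝐞 (θ.2 - θ.1) : ℂ) ^ m) / 3 := by
  simp only [phi1, Real.fourierChar_apply, ← Complex.exp_nat_mul]
  push_cast
  ring_nf

theorem phi1_point_eq (θ : ℝ × ℝ) :
    (fun i : Fin 2 => if i = 0 then phi1 θ else starRingEnd ℂ (phi1 θ)) =
      symmPoint (𝐞 θ.1) (𝐞 (-θ.2)) (𝐞 (θ.2 - θ.1)) := by
  have h := phi1_nat_mul θ 1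
  simp only [Nat.cast_one, one_mul, pow_one, Prod.mk.eta] at h
  funext i
  fin_cases i
  · simp [symmPoint, h]
  · simp [symmPoint, h, map_ofNat, Circle.starRingEnd_add_add (fourierChar_mul_mul_eq_one θ.1 θ.2)]

theorem eval_chebyshevA2_phi1 (m : ℕ) (θ : ℝ × ℝ) :
    eval (fun i : Fin 2 => if i = 0 then phi1 θ else starRingEnd ℂ (phi1 θ)) (chebyshevA2 ℂ m) =
      phi1 ((m : ℝ) * θ.1, (m : ℝ) * θ.2) := by
  have habc := congrArg ((↑) : Circle → ℂ) (fourierChar_mul_mul_eq_one θ.1 θ.2)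
  push_cast at habc
  rw [phi1_point_eq, phi1_nat_mul, eval_chebyshevA2_symmPoint habc]

theorem eq_zero_of_eval_phi1_eq_zero (P : MvPolynomial (Fin 2) ℂ)
    (h : ∀ θ : ℝ × ℝ,
      eval (fun i : Fin 2 => if i = 0 then phi1 θ else starRingEnd ℂ (phi1 θ)) P = 0) :
    P = 0 := by
  refine MvPolynomial.funext fun z ↦ ?_
  obtain ⟨a, b, c, habc, rfl⟩ := exists_symmPoint_eq z
  rw [map_zero]
  refine eval_symmPoint_eq_zero_of_circle P (fun a b c habc ↦ ?_) habc
  obtain ⟨θ, rfl, rfl, rfl⟩ := exists_fourierChar_eq habc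
  rw [← phi1_point_eq]
  exact h θ

/-- There is a unique sequence of bivariate polynomials `f_m ∈ ℂ[x, x̄]` with
`f_m(φ₁(θ), conj (φ₁(θ))) = φ₁(mθ)` for all `θ ∈ ℝ²`; moreover `f_0 = 1`, `f_1 = x`
and `f_2 = 3x² − 2x̄`. -/
theorem generalized_chebyshev_exists_unique :
    ∃! f : ℕ → MvPolynomial (Fin 2) ℂ,
      (∀ (m : ℕ) (θ : ℝ × ℝ),
        MvPolynomial.eval
          (fun i : Fin 2 => if i = 0 then phi1 θ else (starRingEnd ℂ) (phi1 θ)) (f m) =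
          phi1 ((m : ℝ) * θ.1, (m : ℝ) * θ.2)) ∧
      f 0 = 1 ∧ f 1 = MvPolynomial.X 0 ∧
      f 2 = 3 * (MvPolynomial.X 0) ^ 2 - 2 * MvPolynomial.X 1 := by
  refine ⟨chebyshevA2 ℂ, ⟨eval_chebyshevA2_phi1, rfl, rfl, rfl⟩, fun f hf ↦ funext fun m ↦ ?_⟩
  refine sub_eq_zero.mp (eq_zero_of_eval_phi1_eq_zero _ fun θ ↦ ?_)
  rw [map_sub, hf.1, eval_chebyshevA2_phi1, sub_self]
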